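/- In the spanning connectivity game on a finite connected graph G=(V,E) with |V|≥3, the least core coincides with the set of maxmin strategies of the wiretap game: an imputation x ∈ Δ(E) minimizes the maximum excess if and only if Σ_{e∈S} x_e ≥ opt for every connected spanning subgraph S, where opt = max_{E'⊆E} CR(E'); moreover the least-core value ε satisfies ε = 1 − opt. -/

import Mathlib

open Finset

/-- Number of connected components of the graph on `V` with edge set `E`. -/
noncomputable def nComp {V : Type} [Fintype V] [DecidableEq V] (E : Finset (Sym2 V)) : ℕ :=
  Nat.card (SimpleGraph.fromEdgeSet (↑E : Set (Sym2 V))).ConnectedComponent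

/-- The cut-rate of `E' ⊆ E` in the graph with edge set `E`. -/
noncomputable def cutRate {V : Type} [Fintype V] [DecidableEq V]
    (E E' : Finset (Sym2 V)) : ℝ :=
  if 1 < Fintype.card V ∧ E'.Nonempty then
    ((nComp (E \ E') : ℝ) - nComp E) / E'.card
  else 0

/-- The maximum cut-rate of the graph with edge set `E`. -/
noncomputable def opt {V : Type} [Fintype V] [DecidableEq V] (E : Finset (Sym2 V)) : ℝ :=
  E.powerset.sup' (Finset.powerset_nonempty E) (fun E' => cutRate E E')

/-- The graph with edge set `E` is connected. -/
def Conn {V : Type} [Fintype V] [DecidableEq V] (E : Finset (Sym2 V)) : Prop :=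
  (SimpleGraph.fromEdgeSet (↑E : Set (Sym2 V))).Connected

/-- `S` is a connected spanning subgraph of the graph with edge set `E`. -/
def IsCSG {V : Type} [Fintype V] [DecidableEq V] (E S : Finset (Sym2 V)) : Prop :=
  S ⊆ E ∧ Conn S

/-- `α` is a probability distribution on the edge set `E`. -/
def IsDist {V : Type} [Fintype V] [DecidableEq V] (E : Finset (Sym2 V))
    (α : Sym2 V → ℝ) : Prop :=
  (∀ e, 0 ≤ α e) ∧ (∀ e ∉ E, α e = 0) ∧ ∑ e ∈ E, α e = 1

/-- total weight of an edge set under `α`. -/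
noncomputable def wt {V : Type} [Fintype V] [DecidableEq V]
    (α : Sym2 V → ℝ) (S : Finset (Sym2 V)) : ℝ :=
  ∑ e ∈ S, α e

/-- `S` is a minimum-weight connected spanning subgraph for `α`. -/
def IsMinCSG {V : Type} [Fintype V] [DecidableEq V] (E : Finset (Sym2 V))
    (α : Sym2 V → ℝ) (S : Finset (Sym2 V)) : Prop :=
  IsCSG E S ∧ ∀ T, IsCSG E T → wt α S ≤ wt α T

open Classical in
/-- Characteristic function of the spanning connectivity game. -/
noncomputable def vSCG {V : Type} [Fintype V] [DecidableEq V]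
    (E S : Finset (Sym2 V)) : ℝ :=
  if IsCSG E S then 1 else 0

/-- `x` is an imputation whose excesses are all at least `-ε`
(feasibility in the least-core linear program). -/
def LCFeasible {V : Type} [Fintype V] [DecidableEq V] (E : Finset (Sym2 V))
    (x : Sym2 V → ℝ) (ε : ℝ) : Prop :=
  IsDist E x ∧ ∀ S ⊆ E, S ≠ E → wt x S - vSCG E S ≥ -ε




namespace SCGAux

variable {V : Type} [Fintype V] [DecidableEq V]

/-- graph of a finset of edges -/
abbrev gr (F : Finset (Sym2 V)) : SimpleGraph V :=
  SimpleGraph.fromEdgeSet (↑F : Set (Sym2 V))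

lemma gr_adj {F : Finset (Sym2 V)} {a b : V} :
    (gr F).Adj a b ↔ s(a, b) ∈ F ∧ a ≠ b := by
  simp [gr, SimpleGraph.fromEdgeSet_adj]

instance (F : Finset (Sym2 V)) : Finite (gr F).ConnectedComponent := by
  unfold SimpleGraph.ConnectedComponent
  infer_instance

noncomputable def nC (F : Finset (Sym2 V)) : ℕ :=
  Nat.card (gr F).ConnectedComponent

lemma gr_mono {F F' : Finset (Sym2 V)} (h : F ⊆ F') : gr F ≤ gr F' := by
  intro a b hab
  rw [gr_adj] at hab ⊢
  exact ⟨h hab.1, hab.2⟩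

/-- induced map on components -/
noncomputable def cmap {F F' : Finset (Sym2 V)} (h : F ⊆ F') :
    (gr F).ConnectedComponent → (gr F').ConnectedComponent :=
  SimpleGraph.ConnectedComponent.map (SimpleGraph.Hom.ofLE (gr_mono h))

lemma cmap_mk {F F' : Finset (Sym2 V)} (h : F ⊆ F') (v : V) :
    cmap h ((gr F).connectedComponentMk v) = (gr F').connectedComponentMk v := rfl

lemma cmap_surj {F F' : Finset (Sym2 V)} (h : F ⊆ F') :
    Function.Surjective (cmap h) := by
  intro C
  refine C.ind fun v => ⟨(gr F).connectedComponentMk v, rfl⟩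

lemma nC_mono {F F' : Finset (Sym2 V)} (h : F ⊆ F') : nC F' ≤ nC F :=
  Nat.card_le_card_of_surjective _ (cmap_surj h)

/-- walk lemma for insert -/
lemma reach_insert {F : Finset (Sym2 V)} {u v a b : V}
    (h : (gr (insert s(u, v) F)).Reachable a b) :
    (gr F).Reachable a b ∨
      ((gr F).Reachable a u ∨ (gr F).Reachable a v) ∧
      ((gr F).Reachable b u ∨ (gr F).Reachable b v) := by
  obtain ⟨w⟩ := h
  induction w with
  | nil => exact Or.inl (SimpleGraph.Reachable.refl _)
  | @cons a c b h p ih =>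
    rw [gr_adj, Finset.mem_insert] at h
    obtain ⟨hmem | hmem, hne⟩ := h
    · -- s(a,c) = s(u,v)
      rw [Sym2.eq_iff] at hmem
      have hac : (a = u ∧ c = v) ∨ (a = v ∧ c = u) := hmem
      have hra : (gr F).Reachable a u ∨ (gr F).Reachable a v := by
        rcases hac with ⟨h1, _⟩ | ⟨h1, _⟩
        · exact Or.inl (h1 ▸ SimpleGraph.Reachable.refl _)
        · exact Or.inr (h1 ▸ SimpleGraph.Reachable.refl _)
      have hrc : (gr F).Reachable c u ∨ (gr F).Reachable c v := by
        rcases hac with ⟨_, h2⟩ | ⟨_, h2⟩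
        · exact Or.inr (h2 ▸ SimpleGraph.Reachable.refl _)
        · exact Or.inl (h2 ▸ SimpleGraph.Reachable.refl _)
      rcases ih with hcb | ⟨_, hb⟩
      · refine Or.inr ⟨hra, ?_⟩
        rcases hrc with h' | h'
        · exact Or.inl (hcb.symm.trans h')
        · exact Or.inr (hcb.symm.trans h')
      · exact Or.inr ⟨hra, hb⟩
    · -- s(a,c) ∈ F
      have hadj : (gr F).Adj a c := gr_adj.mpr ⟨hmem, hne⟩
      rcases ih with hcb | ⟨hc, hb⟩
      · exact Or.inl (hadj.reachable.trans hcb)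
      · refine Or.inr ⟨?_, hb⟩
        rcases hc with h' | h'
        · exact Or.inl (hadj.reachable.trans h')
        · exact Or.inr (hadj.reachable.trans h')

lemma nC_insert_diag {F : Finset (Sym2 V)} (u : V) :
    gr (insert s(u, u) F) = gr F := by
  ext a b
  simp only [gr_adj, Finset.mem_insert]
  constructor
  · rintro ⟨h1 | h1, h2⟩
    · rw [Sym2.eq_iff] at h1
      rcases h1 with ⟨rfl, rfl⟩ | ⟨rfl, rfl⟩ <;> exact absurd rfl h2
    · exact ⟨h1, h2⟩
  · rintro ⟨h1, h2⟩; exact ⟨Or.inr h1, h2⟩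

lemma nC_le_insert (F : Finset (Sym2 V)) (e : Sym2 V) :
    nC F ≤ nC (insert e F) + 1 := by
  induction e using Sym2.ind with
  | _ u v =>
  by_cases huv : u = v
  · subst huv
    rw [show nC (insert s(u,u) F) = nC F from by unfold nC; rw [nC_insert_diag]]
    omega
  · set F' := insert s(u, v) F with hF'
    have hsub : F ⊆ F' := Finset.subset_insert _ _
    classical
    -- injection into Option
    have key : ∀ C1 C2 : (gr F).ConnectedComponent, cmap hsub C1 = cmap hsub C2 →
        C1 = C2 ∨ ((C1 = (gr F).connectedComponentMk u ∨ C1 = (gr F).connectedComponentMk v) ∧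
                   (C2 = (gr F).connectedComponentMk u ∨ C2 = (gr F).connectedComponentMk v)) := by
      intro C1 C2
      refine SimpleGraph.ConnectedComponent.ind₂ (fun a b h => ?_) C1 C2
      rw [cmap_mk, cmap_mk] at h
      have hr : (gr F').Reachable a b := SimpleGraph.ConnectedComponent.exact h
      rcases reach_insert hr with h' | ⟨ha, hb⟩
      · exact Or.inl (SimpleGraph.ConnectedComponent.sound h')
      · refine Or.inr ⟨?_, ?_⟩
        · rcases ha with h' | h'
          · exact Or.inl (SimpleGraph.ConnectedComponent.sound h')
          · exact Or.inr (SimpleGraph.ConnectedComponent.sound h')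
        · rcases hb with h' | h'
          · exact Or.inl (SimpleGraph.ConnectedComponent.sound h')
          · exact Or.inr (SimpleGraph.ConnectedComponent.sound h')
    set g : (gr F).ConnectedComponent → Option ((gr F').ConnectedComponent) :=
      fun C => if C = (gr F).connectedComponentMk u then none else some (cmap hsub C) with hg
    have hginj : Function.Injective g := by
      intro C1 C2 h
      simp only [hg] at h
      by_cases h1 : C1 = (gr F).connectedComponentMk u <;>
        by_cases h2 : C2 = (gr F).connectedComponentMk u
      · rw [h1, h2]
      · rw [if_pos h1, if_neg h2] at h; exact absurd h.symm (Option.some_ne_none _)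
      · rw [if_neg h1, if_pos h2] at h; exact absurd h (Option.some_ne_none _)
      · rw [if_neg h1, if_neg h2] at h
        have := key C1 C2 (Option.some_injective _ h)
        rcases this with h' | ⟨ha, hb⟩
        · exact h'
        · rcases ha with h' | h'
          · exact absurd h' h1
          · rcases hb with h'' | h''
            · exact absurd h'' h2
            · rw [h', h'']
    have hcard : Nat.card (Option ((gr F').ConnectedComponent)) = nC F' + 1 := by
      haveI : Fintype ((gr F').ConnectedComponent) := Fintype.ofFinite _
      simp [Nat.card_eq_fintype_card, nC]
    calc nC F ≤ Nat.card (Option ((gr F').ConnectedComponent)) :=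
            Nat.card_le_card_of_injective g hginj
    _ = nC F' + 1 := hcard

lemma nC_le_union (F X : Finset (Sym2 V)) : nC F ≤ nC (F ∪ X) + X.card := by
  classical
  induction X using Finset.induction_on with
  | empty => simp
  | @insert e X he ih =>
    rw [Finset.union_insert, Finset.card_insert_of_notMem he]
    have := nC_le_insert (F ∪ X) e
    omega

lemma reach_of_all_adj {F G : Finset (Sym2 V)}
    (hadj : ∀ a b : V, (gr G).Adj a b → (gr F).Reachable a b) {a b : V}
    (h : (gr G).Reachable a b) : (gr F).Reachable a b := by
  obtain ⟨w⟩ := h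
  induction w with
  | nil => exact SimpleGraph.Reachable.refl _
  | @cons a c b h p ih => exact (hadj _ _ h).trans ih

/-- if no edge of `G` joins two distinct `F`-components, the counts agree -/
lemma nC_eq_of_no_merge {F G : Finset (Sym2 V)} (hFG : F ⊆ G)
    (h : ∀ u v : V, s(u, v) ∈ G → u ≠ v → (gr F).Reachable u v) :
    nC G = nC F := by
  have hadj : ∀ a b : V, (gr G).Adj a b → (gr F).Reachable a b := by
    intro a b hab
    rw [gr_adj] at hab
    exact h a b hab.1 hab.2
  have hinj : Function.Injective (cmap hFG) := by
    intro C1 C2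
    refine SimpleGraph.ConnectedComponent.ind₂ (fun a b hh => ?_) C1 C2
    rw [cmap_mk, cmap_mk] at hh
    exact SimpleGraph.ConnectedComponent.sound
      (reach_of_all_adj hadj (SimpleGraph.ConnectedComponent.exact hh))
  exact le_antisymm (nC_mono hFG) (Nat.card_le_card_of_injective _ hinj)

lemma nC_lt_of_merge {F : Finset (Sym2 V)} {u v : V} (huv : u ≠ v)
    (hnr : ¬ (gr F).Reachable u v) :
    nC (insert s(u, v) F) < nC F := by
  set F' := insert s(u, v) F with hF'
  have hsub : F ⊆ F' := Finset.subset_insert _ _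
  have hle : nC F' ≤ nC F := nC_mono hsub
  rcases lt_or_eq_of_le hle with h | h
  · exact h
  · exfalso
    have hbij : Function.Bijective (cmap hsub) :=
      (cmap_surj hsub).bijective_of_nat_card_le (le_of_eq h.symm)
    have : cmap hsub ((gr F).connectedComponentMk u) =
        cmap hsub ((gr F).connectedComponentMk v) := by
      rw [cmap_mk, cmap_mk]
      refine SimpleGraph.ConnectedComponent.sound ?_
      exact (gr_adj.mpr ⟨Finset.mem_insert_self _ _, huv⟩).reachable
    have := hbij.1 this
    exact hnr (SimpleGraph.ConnectedComponent.exact this)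


lemma nC_pos [Nonempty V] (F : Finset (Sym2 V)) : 1 ≤ nC F := by
  have : Nonempty ((gr F).ConnectedComponent) :=
    ⟨(gr F).connectedComponentMk Classical.ofNonempty⟩
  exact Nat.one_le_iff_ne_zero.mpr (Nat.card_ne_zero.mpr ⟨this, inferInstance⟩)

lemma nC_empty : nC (∅ : Finset (Sym2 V)) = Fintype.card V := by
  have hbot : gr (∅ : Finset (Sym2 V)) = ⊥ := by
    unfold gr
    rw [Finset.coe_empty, SimpleGraph.fromEdgeSet_empty]
  have hbij : Function.Bijective ((gr (∅ : Finset (Sym2 V))).connectedComponentMk) := by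
    constructor
    · intro a b h
      have := SimpleGraph.ConnectedComponent.exact h
      rw [hbot] at this
      exact SimpleGraph.reachable_bot.mp this
    · intro C; exact C.ind fun v => ⟨v, rfl⟩
  rw [nC, ← Nat.card_eq_fintype_card]
  exact (Nat.card_eq_of_bijective _ hbij).symm

lemma nC_eq_one_of_conn {F : Finset (Sym2 V)} (h : (gr F).Connected) : nC F = 1 := by
  rw [nC, Nat.card_eq_one_iff_unique]
  constructor
  · constructor
    intro C D
    refine SimpleGraph.ConnectedComponent.ind₂ (fun a b => ?_) C D
    exact SimpleGraph.ConnectedComponent.sound (h.preconnected a b)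
  · have : Nonempty V := h.nonempty
    exact ⟨(gr F).connectedComponentMk Classical.ofNonempty⟩

lemma conn_of_nC_eq_one [Nonempty V] {F : Finset (Sym2 V)} (h : nC F = 1) :
    (gr F).Connected := by
  rw [nC, Nat.card_eq_one_iff_unique] at h
  constructor
  intro a b
  have := h.1
  exact SimpleGraph.ConnectedComponent.exact
    (Subsingleton.elim ((gr F).connectedComponentMk a) ((gr F).connectedComponentMk b))

/-- connecting lemma -/
lemma connect_up [Nonempty V] (G : Finset (Sym2 V)) :
    ∀ n (F : Finset (Sym2 V)), nC F ≤ n → F ⊆ G →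
    ∃ X, X ⊆ G ∧ nC (F ∪ X) = nC G ∧ X.card + nC G ≤ nC F := by
  intro n
  induction n with
  | zero => intro F h _; exact absurd (nC_pos F) (by omega)
  | succ n ih =>
    intro F hFn hFG
    by_cases heq : nC G = nC F
    · exact ⟨∅, Finset.empty_subset _, by rw [Finset.union_empty]; exact heq.symm, by simp [heq]⟩
    · have hlt : nC G < nC F := lt_of_le_of_ne (nC_mono hFG) heq
      have hmerge : ∃ u v : V, s(u, v) ∈ G ∧ u ≠ v ∧ ¬ (gr F).Reachable u v := by
        by_contra hc
        push_neg at hc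
        exact heq (nC_eq_of_no_merge hFG (fun u v h1 h2 => hc u v h1 h2))
      obtain ⟨u, v, huvG, huv, hnr⟩ := hmerge
      have hdec : nC (insert s(u, v) F) < nC F := nC_lt_of_merge huv hnr
      have hsub' : insert s(u, v) F ⊆ G := Finset.insert_subset huvG hFG
      obtain ⟨X', hX'G, hX'c, hX'card⟩ := ih (insert s(u, v) F) (by omega) hsub'
      refine ⟨insert s(u, v) X', Finset.insert_subset huvG hX'G, ?_, ?_⟩
      · rw [Finset.union_insert, ← Finset.insert_union]; exact hX'c
      · have := Finset.card_insert_le s(u, v) X'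
        omega

/-- chain lemma -/
lemma chain_lemma [Nonempty V] (c : ℕ → Finset (Sym2 V)) (hmono : Monotone c) (k : ℕ) :
    ∃ S, S ⊆ c k ∧ nC S = nC (c k) ∧
      ∀ j ≤ k, (S \ c j).card + nC (c k) ≤ nC (c j) := by
  induction k with
  | zero =>
    refine ⟨c 0, le_rfl, rfl, ?_⟩
    intro j hj
    interval_cases j
    simp
  | succ k ih =>
    obtain ⟨S, hSsub, hSc, hSb⟩ := ih
    have hsub2 : S ⊆ c (k + 1) := hSsub.trans (hmono (Nat.le_succ k))
    obtain ⟨X, hXG, hXc, hXcard⟩ := connect_up (c (k + 1)) (nC S) S le_rfl hsub2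
    refine ⟨S ∪ X, Finset.union_subset hsub2 hXG, hXc, ?_⟩
    intro j hj
    rcases Nat.lt_or_ge j (k + 1) with hjk | hjk
    · have hjk' : j ≤ k := by omega
      have h1 : (S ∪ X) \ c j ⊆ (S \ c j) ∪ X := by
        intro e he
        rw [Finset.mem_sdiff, Finset.mem_union] at he
        rw [Finset.mem_union, Finset.mem_sdiff]
        tauto
      have h2 : ((S ∪ X) \ c j).card ≤ (S \ c j).card + X.card :=
        le_trans (Finset.card_le_card h1) (Finset.card_union_le _ _)
      have h3 := hSb j hjk'
      rw [hSc] at hXcard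
      omega
    · have hj1 : j = k + 1 := by omega
      subst hj1
      have : (S ∪ X) \ c (k + 1) = ∅ := by
        rw [Finset.sdiff_eq_empty_iff_subset]
        exact Finset.union_subset hsub2 hXG
      rw [this]
      simp [nC_pos]

end SCGAux

section Main

variable {V : Type} [Fintype V] [DecidableEq V]

open SCGAux

lemma nComp_eq_nC (F : Finset (Sym2 V)) : nComp F = nC F := rfl

lemma conn_iff (F : Finset (Sym2 V)) : Conn F ↔ (gr F).Connected := Iff.rfl

lemma cutRate_le_opt (E : Finset (Sym2 V)) {E' : Finset (Sym2 V)} (h : E' ⊆ E) :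
    cutRate E E' ≤ opt E :=
  Finset.le_sup' (cutRate E) (Finset.mem_powerset.mpr h)

lemma E_nonempty {E : Finset (Sym2 V)} (hconn : Conn E) (hV : 3 ≤ Fintype.card V) :
    E.Nonempty := by
  rw [Finset.nonempty_iff_ne_empty]
  intro h
  have h1 : nC E = 1 := nC_eq_one_of_conn ((conn_iff E).mp hconn)
  rw [h] at h1
  rw [nC_empty] at h1
  omega

lemma nonempty_V (hV : 3 ≤ Fintype.card V) : Nonempty V :=
  Fintype.card_pos_iff.mp (by omega)

lemma opt_le_one {E : Finset (Sym2 V)} (hconn : Conn E) (hV : 3 ≤ Fintype.card V) :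
    opt E ≤ 1 := by
  apply Finset.sup'_le
  intro E' hE'
  rw [Finset.mem_powerset] at hE'
  rw [cutRate]
  split
  · rename_i hcond
    obtain ⟨hV1, hne⟩ := hcond
    have hcard : (0:ℝ) < E'.card := by
      exact_mod_cast Finset.card_pos.mpr hne
    rw [div_le_one hcard]
    have key : nComp (E \ E') ≤ nComp E + E'.card := by
      rw [nComp_eq_nC, nComp_eq_nC]
      have h1 := nC_le_union (E \ E') E'
      rwa [Finset.sdiff_union_of_subset hE'] at h1
    have : ((nComp (E \ E') : ℝ)) ≤ (nComp E : ℝ) + E'.card := by exact_mod_cast key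
    linarith
  · linarith

lemma opt_pos {E : Finset (Sym2 V)} (hconn : Conn E) (hV : 3 ≤ Fintype.card V) :
    0 < opt E := by
  have hEne := E_nonempty hconn hV
  have h1 : cutRate E E ≤ opt E := cutRate_le_opt E le_rfl
  have h2 : cutRate E E = ((Fintype.card V : ℝ) - 1) / E.card := by
    rw [cutRate, if_pos ⟨by omega, hEne⟩, Finset.sdiff_self]
    rw [nComp_eq_nC, nComp_eq_nC, nC_empty, nC_eq_one_of_conn ((conn_iff E).mp hconn)]
    norm_num
  have hcard : (0:ℝ) < E.card := by exact_mod_cast Finset.card_pos.mpr hEne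
  have : (0:ℝ) < ((Fintype.card V : ℝ) - 1) / E.card := by
    apply div_pos _ hcard
    have : (3:ℝ) ≤ Fintype.card V := by exact_mod_cast hV
    linarith
  linarith [h2 ▸ h1]

lemma csg_inter_card {E S E₀ : Finset (Sym2 V)} (hS : IsCSG E S) :
    nComp (E \ E₀) ≤ (S ∩ E₀).card + 1 := by
  rw [nComp_eq_nC]
  have h1 : S \ E₀ ⊆ E \ E₀ := fun e he => by
    rw [Finset.mem_sdiff] at he ⊢
    exact ⟨hS.1 he.1, he.2⟩
  have h2 : nC (E \ E₀) ≤ nC (S \ E₀) := nC_mono h1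
  have h3 : nC (S \ E₀) ≤ nC ((S \ E₀) ∪ (S ∩ E₀)) + (S ∩ E₀).card :=
    nC_le_union _ _
  rw [Finset.sdiff_union_inter] at h3
  have h4 : nC S = 1 := nC_eq_one_of_conn ((conn_iff S).mp hS.2)
  omega

/-- existence of a maxmin (optimal hider) strategy -/
lemma exists_good_dist {E : Finset (Sym2 V)} (hconn : Conn E) (hV : 3 ≤ Fintype.card V) :
    ∃ x, IsDist E x ∧ ∀ S, IsCSG E S → opt E ≤ wt x S := by
  classical
  have hEne := E_nonempty hconn hV
  obtain ⟨E₀, hE₀mem, hE₀⟩ := Finset.exists_mem_eq_sup' (Finset.powerset_nonempty E)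
    (cutRate E)
  rw [Finset.mem_powerset] at hE₀mem
  have hopt : opt E = cutRate E E₀ := hE₀
  have hoptpos := opt_pos hconn hV
  have hE₀ne : E₀.Nonempty := by
    by_contra h
    rw [hopt, cutRate, if_neg (by tauto)] at hoptpos
    linarith
  have hE₀card : (0:ℝ) < E₀.card := by exact_mod_cast Finset.card_pos.mpr hE₀ne
  refine ⟨fun e => if e ∈ E₀ then (E₀.card : ℝ)⁻¹ else 0, ⟨?_, ?_, ?_⟩, ?_⟩
  · intro e
    dsimp only
    split
    · positivity
    · exact le_rfl
  · intro e he
    dsimp only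
    rw [if_neg (fun h => he (hE₀mem h))]
  · rw [Finset.sum_ite_mem, Finset.inter_eq_right.mpr hE₀mem, Finset.sum_const,
      nsmul_eq_mul]
    field_simp
  · intro S hS
    have hwt : wt (fun e => if e ∈ E₀ then (E₀.card : ℝ)⁻¹ else 0) S
        = ((S ∩ E₀).card : ℝ) / E₀.card := by
      rw [wt, Finset.sum_ite_mem, Finset.sum_const, nsmul_eq_mul, div_eq_mul_inv]
    rw [hwt, hopt, cutRate, if_pos ⟨by omega, hE₀ne⟩]
    have hk := csg_inter_card (E₀ := E₀) hS
    have hk' : ((nComp (E \ E₀) : ℝ)) ≤ ((S ∩ E₀).card : ℝ) + 1 := by exact_mod_cast hk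
    have h1 : (nComp E : ℝ) = 1 := by
      rw [nComp_eq_nC, nC_eq_one_of_conn ((conn_iff E).mp hconn)]
      norm_num
    rw [h1]
    gcongr
    linarith

end Main

section Cheap

variable {V : Type} [Fintype V] [DecidableEq V]

open SCGAux Finset

lemma exists_cheap_csg {E : Finset (Sym2 V)} (hconn : Conn E) (hV : 3 ≤ Fintype.card V)
    {x : Sym2 V → ℝ} (hx : IsDist E x) :
    ∃ S, IsCSG E S ∧ wt x S ≤ opt E := by
  classical
  haveI : Nonempty V := nonempty_V hV
  have hEne := E_nonempty hconn hV
  set m := E.card with hm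
  have hm0 : 0 < m := Finset.card_pos.mpr hEne
  have hxnn : ∀ e, 0 ≤ x e := hx.1
  -- sorted enumeration of E
  obtain ⟨g, hgmono, hgmem, hgsurj⟩ :
      ∃ g : ℕ → Sym2 V, (∀ i j, i ≤ j → x (g i) ≤ x (g j)) ∧ (∀ i, g i ∈ E) ∧
        (∀ e ∈ E, ∃ i, i < m ∧ g i = e) := by
    have e0 : Fin m → Sym2 V := fun i => (E.equivFin.symm i : Sym2 V)
    set e1 : Fin m → Sym2 V := fun i => (E.equivFin.symm i : Sym2 V) with he1
    set σ := Tuple.sort (fun i => x (e1 i)) with hσ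
    refine ⟨fun i => e1 (σ ⟨min i (m - 1), by omega⟩), ?_, ?_, ?_⟩
    · intro i j hij
      have := Tuple.monotone_sort (fun i => x (e1 i))
        (a := ⟨min i (m - 1), by omega⟩) (b := ⟨min j (m - 1), by omega⟩)
        (by rw [Fin.mk_le_mk]; omega)
      exact this
    · intro i
      exact (E.equivFin.symm _).2
    · intro e he
      refine ⟨(σ.symm (E.equivFin ⟨e, he⟩) : Fin m), (σ.symm (E.equivFin ⟨e, he⟩)).2, ?_⟩
      have hmin : (⟨min ((σ.symm (E.equivFin ⟨e, he⟩) : Fin m) : ℕ) (m - 1), by omega⟩ : Fin m)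
          = σ.symm (E.equivFin ⟨e, he⟩) := by
        apply Fin.ext
        simp only
        have := (σ.symm (E.equivFin ⟨e, he⟩)).2
        omega
      show e1 (σ ⟨min (((σ.symm (E.equivFin ⟨e, he⟩)) : Fin m) : ℕ) (m - 1), by omega⟩) = e
      rw [hmin]
      simp [he1]
  set W : ℕ → ℝ := fun j => if j = 0 then 0 else x (g (j - 1)) with hWdef
  set c : ℕ → Finset (Sym2 V) :=
    fun j => if j = 0 then ∅ else E.filter (fun e => x e ≤ x (g (j - 1))) with hcdef
  have hc0 : c 0 = ∅ := by simp [hcdef]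
  have hcj : ∀ j, j ≠ 0 → c j = E.filter (fun e => x e ≤ x (g (j - 1))) := by
    intro j hj; simp [hcdef, hj]
  have hW0 : W 0 = 0 := by simp [hWdef]
  have hWj : ∀ j, j ≠ 0 → W j = x (g (j - 1)) := by
    intro j hj; simp [hWdef, hj]
  have hWmono : ∀ j, W j ≤ W (j + 1) := by
    intro j
    by_cases hj : j = 0
    · subst hj
      rw [hW0, hWj 1 one_ne_zero]
      exact hxnn _
    · rw [hWj j hj, hWj (j + 1) (by omega)]
      simp only [Nat.add_sub_cancel]
      exact hgmono _ _ (by omega)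
  have hcmono : Monotone c := by
    intro j j' hjj'
    by_cases hj : j = 0
    · subst hj; rw [hc0]; exact Finset.empty_subset _
    · have hj' : j' ≠ 0 := by omega
      rw [hcj j hj, hcj j' hj']
      intro e he
      rw [Finset.mem_filter] at he ⊢
      exact ⟨he.1, he.2.trans (hgmono _ _ (by omega))⟩
  have hcsubE : ∀ j, c j ⊆ E := by
    intro j
    by_cases hj : j = 0
    · subst hj; rw [hc0]; exact Finset.empty_subset _
    · rw [hcj j hj]; exact Finset.filter_subset _ _
  have hcm : c m = E := by
    rw [hcj m (by omega)]
    apply Finset.Subset.antisymm (Finset.filter_subset _ _)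
    intro e he
    rw [Finset.mem_filter]
    obtain ⟨i, him, hgi⟩ := hgsurj e he
    exact ⟨he, by rw [← hgi]; exact hgmono i (m - 1) (by omega)⟩
  have hnotc : ∀ e ∈ E, ∀ j, e ∉ c j → W j ≤ x e ∧ W (j + 1) ≤ x e := by
    intro e he j hj
    obtain ⟨i, him, hgi⟩ := hgsurj e he
    by_cases h0 : j = 0
    · subst h0
      rw [hW0, hWj 1 one_ne_zero]
      exact ⟨hxnn e, by rw [← hgi]; exact hgmono 0 i (by omega)⟩
    · have hlt : ¬ (x e ≤ x (g (j - 1))) := by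
        intro hle
        exact hj (by rw [hcj j h0, Finset.mem_filter]; exact ⟨he, hle⟩)
      push_neg at hlt
      rw [hWj j h0, hWj (j + 1) (by omega)]
      simp only [Nat.add_sub_cancel]
      constructor
      · exact hlt.le
      · rw [← hgi]
        apply hgmono
        by_contra hji
        push_neg at hji
        rw [← hgi] at hlt
        exact absurd (hgmono i (j - 1) (by omega)) (not_le.mpr hlt)
  have hinc : ∀ e, ∀ j, j ≠ 0 → e ∈ c j → x e ≤ W j := by
    intro e j hj he
    rw [hcj j hj, Finset.mem_filter] at he
    rw [hWj j hj]
    exact he.2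
  -- per-edge layer cake identity
  have hperedge : ∀ e ∈ E,
      ∑ j ∈ Finset.range m, (W (j + 1) - W j) * (if e ∈ c j then 0 else 1) = x e := by
    intro e he
    have hstep : ∀ j ∈ Finset.range m, (W (j + 1) - W j) * (if e ∈ c j then (0:ℝ) else 1)
        = min (x e) (W (j + 1)) - min (x e) (W j) := by
      intro j _
      by_cases hj : e ∈ c j
      · have hj0 : j ≠ 0 := by
          intro h0; subst h0; rw [hc0] at hj; exact absurd hj (Finset.notMem_empty e)
        have h1 : x e ≤ W j := hinc e j hj0 hj
        have h2 : x e ≤ W (j + 1) := h1.trans (hWmono j)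
        rw [if_pos hj, mul_zero, min_eq_left h1, min_eq_left h2, sub_self]
      · obtain ⟨h1, h2⟩ := hnotc e he j hj
        rw [if_neg hj, mul_one, min_eq_right h2, min_eq_right h1]
    rw [Finset.sum_congr rfl hstep, Finset.sum_range_sub (fun j => min (x e) (W j))]
    have hWm : x e ≤ W m := by
      obtain ⟨i, him, hgi⟩ := hgsurj e he
      rw [hWj m (by omega), ← hgi]
      exact hgmono i (m - 1) (by omega)
    rw [hW0, min_eq_left hWm, min_eq_right (hxnn e), sub_zero]
  -- apply the chain lemma
  obtain ⟨S, hSsub, hSc, hSb⟩ := SCGAux.chain_lemma c hcmono m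
  rw [hcm] at hSsub hSc hSb
  have hE1 : nC E = 1 := nC_eq_one_of_conn ((conn_iff E).mp hconn)
  rw [hE1] at hSc hSb
  have hSconn : Conn S := (conn_iff S).mpr (conn_of_nC_eq_one hSc)
  refine ⟨S, ⟨hSsub, hSconn⟩, ?_⟩
  -- indicator sums
  have hind : ∀ (T : Finset (Sym2 V)) (j : ℕ),
      ∑ e ∈ T, (if e ∈ c j then (0:ℝ) else 1) = ((T \ c j).card : ℝ) := by
    intro T j
    rw [show (fun e => if e ∈ c j then (0:ℝ) else 1) = fun e => if e ∉ c j then 1 else 0 by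
      funext e; by_cases h : e ∈ c j <;> simp [h]]
    rw [Finset.sum_boole]
    congr 1
    rw [Finset.sdiff_eq_filter]
  -- weight of a set as a layered sum
  have hlayer : ∀ T : Finset (Sym2 V), T ⊆ E →
      ∑ e ∈ T, x e = ∑ j ∈ Finset.range m, (W (j + 1) - W j) * ((T \ c j).card : ℝ) := by
    intro T hT
    rw [Finset.sum_congr rfl (fun e he => (hperedge e (hT he)).symm), Finset.sum_comm]
    apply Finset.sum_congr rfl
    intro j _
    rw [← Finset.mul_sum, hind]
  have hwtS : wt x S = ∑ j ∈ Finset.range m, (W (j + 1) - W j) * ((S \ c j).card : ℝ) :=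
    hlayer S hSsub
  have hwtE : (1:ℝ) = ∑ j ∈ Finset.range m, (W (j + 1) - W j) * ((E \ c j).card : ℝ) := by
    rw [← hx.2.2]; exact hlayer E le_rfl
  -- termwise bound
  have hterm : ∀ j ∈ Finset.range m,
      (W (j + 1) - W j) * ((S \ c j).card : ℝ)
        ≤ (W (j + 1) - W j) * (opt E * ((E \ c j).card : ℝ)) := by
    intro j hjr
    rw [Finset.mem_range] at hjr
    rcases eq_or_lt_of_le (hWmono j) with heq | hlt
    · rw [← heq, sub_self, zero_mul, zero_mul]
    · apply mul_le_mul_of_nonneg_left _ (by linarith)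
      -- (S \ c j).card ≤ opt E * (E \ c j).card
      have hEcne : (E \ c j).Nonempty := by
        by_cases hj : j = 0
        · subst hj; rw [hc0, Finset.sdiff_empty]; exact hEne
        · refine ⟨g j, ?_⟩
          rw [Finset.mem_sdiff]
          refine ⟨hgmem j, ?_⟩
          intro hmem
          have := hinc (g j) j hj hmem
          rw [hWj (j + 1) (by omega)] at hlt
          simp only [Nat.add_sub_cancel] at hlt
          linarith
      have hcr : cutRate E (E \ c j) ≤ opt E := cutRate_le_opt E (Finset.sdiff_subset)
      have hcomp : E \ (E \ c j) = c j := Finset.sdiff_sdiff_eq_self (hcsubE j)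
      have hcard : (0:ℝ) < ((E \ c j).card : ℝ) := by
        exact_mod_cast Finset.card_pos.mpr hEcne
      rw [cutRate, if_pos ⟨by omega, hEcne⟩, hcomp] at hcr
      have hnE : (nComp E : ℝ) = 1 := by rw [nComp_eq_nC, hE1]; norm_num
      rw [hnE, div_le_iff₀ hcard] at hcr
      have hSj : ((S \ c j).card : ℝ) ≤ (nComp (c j) : ℝ) - 1 := by
        have := hSb j hjr.le
        rw [nComp_eq_nC]
        have h2 : (S \ c j).card + 1 ≤ nC (c j) := this
        have : ((S \ c j).card : ℝ) + 1 ≤ (nC (c j) : ℝ) := by exact_mod_cast h2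
        linarith
      linarith
  calc wt x S = ∑ j ∈ Finset.range m, (W (j + 1) - W j) * ((S \ c j).card : ℝ) := hwtS
  _ ≤ ∑ j ∈ Finset.range m, (W (j + 1) - W j) * (opt E * ((E \ c j).card : ℝ)) :=
      Finset.sum_le_sum hterm
  _ = opt E * ∑ j ∈ Finset.range m, (W (j + 1) - W j) * ((E \ c j).card : ℝ) := by
      rw [Finset.mul_sum]; apply Finset.sum_congr rfl; intro j _; ring
  _ = opt E * 1 := by rw [← hwtE]
  _ = opt E := mul_one _

end Cheap

theorem stmt_18 {V : Type} [Fintype V] [DecidableEq V] (E : Finset (Sym2 V))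
    (hconn : Conn E) (hV : 3 ≤ Fintype.card V) :
    sInf {ε : ℝ | ∃ x, LCFeasible E x ε} = 1 - opt E ∧
    ∀ x, IsDist E x →
      (LCFeasible E x (1 - opt E) ↔ ∀ S, IsCSG E S → opt E ≤ wt x S) := by
  classical
  haveI : Nonempty V := nonempty_V hV
  have hEne := E_nonempty hconn hV
  have hopt1 := opt_le_one hconn hV
  have hoptpos := opt_pos hconn hV
  have hnotconn_empty : ¬ Conn (∅ : Finset (Sym2 V)) := by
    intro h
    have := SCGAux.nC_eq_one_of_conn ((conn_iff _).mp h)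
    rw [SCGAux.nC_empty] at this
    omega
  have hlb : ∀ ε ∈ {ε : ℝ | ∃ x, LCFeasible E x ε}, 1 - opt E ≤ ε := by
    rintro ε ⟨x, hxd, hxf⟩
    have hεnn : 0 ≤ ε := by
      have h := hxf ∅ (Finset.empty_subset E) (Ne.symm hEne.ne_empty)
      have hv : vSCG E ∅ = 0 := by
        rw [vSCG, if_neg]
        rintro ⟨_, hc⟩
        exact hnotconn_empty hc
      rw [hv, wt, Finset.sum_empty, sub_zero] at h
      linarith
    obtain ⟨S, hS, hSwt⟩ := exists_cheap_csg hconn hV hxd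
    by_cases hSE : S = E
    · subst hSE
      rw [wt, hxd.2.2] at hSwt
      linarith
    · have h := hxf S hS.1 hSE
      have hv : vSCG E S = 1 := by rw [vSCG, if_pos hS]
      rw [hv] at h
      linarith
  obtain ⟨x₀, hx₀d, hx₀⟩ := exists_good_dist hconn hV
  have hx₀f : LCFeasible E x₀ (1 - opt E) := by
    refine ⟨hx₀d, ?_⟩
    intro S hSE hSne
    by_cases hS : IsCSG E S
    · have hv : vSCG E S = 1 := by rw [vSCG, if_pos hS]
      rw [hv]
      have := hx₀ S hS
      linarith
    · have hv : vSCG E S = 0 := by rw [vSCG, if_neg hS]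
      rw [hv]
      have : 0 ≤ wt x₀ S := Finset.sum_nonneg (fun e _ => hx₀d.1 e)
      linarith
  constructor
  · apply le_antisymm
    · exact csInf_le ⟨1 - opt E, hlb⟩ ⟨x₀, hx₀f⟩
    · exact le_csInf ⟨1 - opt E, x₀, hx₀f⟩ hlb
  · intro x hxd
    constructor
    · rintro ⟨_, hf⟩ S hS
      by_cases hSE : S = E
      · subst hSE
        rw [wt, hxd.2.2]
        exact hopt1
      · have h := hf S hS.1 hSE
        have hv : vSCG E S = 1 := by rw [vSCG, if_pos hS]
        rw [hv] at h
        linarith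
    · intro h
      refine ⟨hxd, ?_⟩
      intro S hSE hSne
      by_cases hS : IsCSG E S
      · have hv : vSCG E S = 1 := by rw [vSCG, if_pos hS]
        rw [hv]
        have := h S hS
        linarith
      · have hv : vSCG E S = 0 := by rw [vSCG, if_neg hS]
        rw [hv]
        have : 0 ≤ wt x S := Finset.sum_nonneg (fun e _ => hxd.1 e)
        linarith
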